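/- arXiv:1509.03153 — 2 statements merged into one kernel-verified Lean document; each statement's English description precedes it below -/
import Mathlib

section
/- Let G be a strongly connected multidigraph with incidence matrix C. Then the vectors ν_σ, as σ ranges over the elementary cycles of G, span the kernel of C. -/
/-- A multidigraph: a set of nodes `V`, a set of edges `E`, and source/target maps. -/
structure Multidigraph (V E : Type*) where
  src : E → V
  tgt : E → V

namespace Multidigraph

variable {V E : Type*}

/-- One-step edge relation using only the edges in `τ`. -/
def Rel (G : Multidigraph V E) (τ : Set E) (a b : V) : Prop :=
  ∃ e ∈ τ, G.src e = a ∧ G.tgt e = b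

/-- Undirected (symmetrized) one-step relation. -/
def URel (G : Multidigraph V E) (a b : V) : Prop :=
  G.Rel Set.univ a b ∨ G.Rel Set.univ b a

/-- Node set of the (weakly) connected component containing `v`. -/
def component (G : Multidigraph V E) (v : V) : Set V :=
  {w | Relation.ReflTransGen G.URel v w}

/-- `τ` is a spanning tree of the subgraph of `G` induced on the node set `W`,
rooted at `r`: all edges stay inside `W`, every non-root node of `W` has exactly
one outgoing edge in `τ`, the root has none, and every node of `W` reaches `r`
through `τ`. -/
def IsSpanningTreeOn (G : Multidigraph V E) (W : Set V) (τ : Finset E) (r : V) : Prop :=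
  (∀ e ∈ τ, G.src e ∈ W ∧ G.tgt e ∈ W) ∧
  (∀ v ∈ W, v ≠ r → ∃! e, e ∈ τ ∧ G.src e = v) ∧
  (∀ e ∈ τ, G.src e ≠ r) ∧
  (∀ v ∈ W, Relation.ReflTransGen (G.Rel (τ : Set E)) v r)

/-- Spanning tree of `G` rooted at `r`. -/
def IsSpanningTree (G : Multidigraph V E) (τ : Finset E) (r : V) : Prop :=
  G.IsSpanningTreeOn Set.univ τ r

/-- A cycle: a nonempty closed directed path with pairwise distinct nodes. -/
def IsCycle (G : Multidigraph V E) (l : List E) : Prop :=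
  l ≠ [] ∧ (l.map G.src).Nodup ∧
  l.Chain' (fun a b => G.tgt a = G.src b) ∧
  ∀ h : l ≠ [], G.tgt (l.getLast h) = G.src (l.head h)

def StronglyConnected (G : Multidigraph V E) : Prop :=
  ∀ a b : V, Relation.ReflTransGen (G.Rel Set.univ) a b

def Connected (G : Multidigraph V E) : Prop :=
  ∀ a b : V, Relation.ReflTransGen G.URel a b

/-- Incidence matrix of a multidigraph. -/
def incidence [DecidableEq V] (G : Multidigraph V E) : Matrix V E ℝ := fun v e =>
  if G.tgt e = v ∧ G.src e ≠ v then 1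
  else if G.src e = v ∧ G.tgt e ≠ v then (-1 : ℝ) else 0

end Multidigraph

/-!
Along a closed walk every node is entered as often as it is left, so edge-count vectors of closed
walks, in particular cycle vectors `ν_σ`, lie in the kernel of `C`. Conversely, a nonnegative `w`
in the kernel is a conserved flow: every node entered along a positive edge is also left along one,
so following positive edges eventually closes up into a cycle `σ`, and subtracting
`(min_σ w) • ν_σ` leaves a nonnegative flow with smaller support. Strong connectivity puts every
edge on a closed walk; adding up their edge-count vectors gives a flow `x ≥ 1`, and any `w` in the
kernel is the difference of the nonnegative flows `w + ‖w‖ • x` and `‖w‖ • x`.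
-/

theorem Finset.sum_filter_count_eq_count_map {α β : Type*} [Fintype α] [DecidableEq α]
    [DecidableEq β] (f : α → β) (l : List α) (b : β) :
    ∑ a with f a = b, l.count a = (l.map f).count b := by
  induction l with
  | nil => simp
  | cons a t ih =>
    simp only [List.count_cons, List.map_cons, beq_iff_eq, Finset.sum_add_distrib, ih]
    simp [eq_comm]

theorem Function.exists_iterate_mem_periodicPts {α : Type*} [Finite α] (f : α → α) (x : α) :
    ∃ m, f^[m] x ∈ Function.periodicPts f := by
  obtain ⟨m, n, hmn, heq⟩ : ∃ m n, m < n ∧ f^[m] x = f^[n] x := by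
    obtain ⟨m, n, heq, hne⟩ : ∃ m n, f^[m] x = f^[n] x ∧ m ≠ n := by
      simpa [Function.Injective] using not_injective_infinite_finite (f^[·] x)
    rcases hne.lt_or_gt with h | h
    exacts [⟨m, n, h, heq⟩, ⟨n, m, h, heq.symm⟩]
  refine ⟨m, Function.mk_mem_periodicPts (n := n - m) (by omega) ?_⟩
  rw [Function.IsPeriodicPt, Function.IsFixedPt, ← Function.iterate_add_apply,
    Nat.sub_add_cancel hmn.le, heq]

open Function
open scoped Matrix

namespace Multidigraph

variable {V E : Type*} (G : Multidigraph V E)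

def IsClosedWalk (l : List E) : Prop :=
  l.IsChain (fun a b => G.tgt a = G.src b) ∧
    ∀ h : l ≠ [], G.tgt (l.getLast h) = G.src (l.head h)

variable {G}

theorem IsCycle.isClosedWalk {l : List E} (hl : G.IsCycle l) : G.IsClosedWalk l :=
  ⟨hl.2.2.1, hl.2.2.2⟩

theorem IsClosedWalk.map_tgt_eq_rotate {l : List E} (hl : G.IsClosedWalk l) :
    l.map G.tgt = (l.map G.src).rotate 1 := by
  obtain ⟨hchain, hclose⟩ := hl
  refine List.ext_getElem (by simp) fun i hi _ => ?_
  simp only [List.length_map] at hi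
  simp only [List.getElem_rotate, List.getElem_map, List.length_map]
  rcases Nat.lt_or_ge (i + 1) l.length with h | h
  · simpa [Nat.mod_eq_of_lt h] using List.isChain_iff_getElem.mp hchain i h
  · have hwrap : (i + 1) % l.length = 0 := by rw [show i + 1 = l.length by omega, Nat.mod_self]
    have hl : l ≠ [] := List.ne_nil_of_length_pos (by omega)
    simpa [hwrap, List.getLast_eq_getElem, List.head_eq_getElem, show l.length - 1 = i by omega]
      using hclose hl

theorem IsClosedWalk.map_tgt_perm {l : List E} (hl : G.IsClosedWalk l) :
    (l.map G.tgt).Perm (l.map G.src) :=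
  hl.map_tgt_eq_rotate ▸ List.rotate_perm _ _

theorem isCycle_map_range_iterate {ι : Type*} {pos : ι → V} (hpos : pos.Injective)
    {f : ι → ι} {nxt : ι → E} (hsrc : ∀ a, G.src (nxt a) = pos a)
    (htgt : ∀ a, G.tgt (nxt a) = pos (f a)) {u : ι} (hu : u ∈ periodicPts f) :
    G.IsCycle ((List.range (minimalPeriod f u)).map fun k => nxt (f^[k] u)) := by
  have hp := minimalPeriod_pos_of_mem_periodicPts hu
  refine ⟨by simpa using hp.ne', ?_, ?_, fun _ => ?_⟩
  · rw [List.map_map]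
    refine List.nodup_range.map_on fun a ha b hb hab => ?_
    simp only [comp_apply, hsrc] at hab
    exact iterate_injOn_Iio_minimalPeriod (List.mem_range.mp ha) (List.mem_range.mp hb)
      (hpos hab)
  · refine List.isChain_iff_getElem.mpr fun k hk => ?_
    simp [hsrc, htgt, iterate_succ_apply']
  · have hlast : f (f^[minimalPeriod f u - 1] u) = u := by
      rw [← iterate_succ_apply' f, Nat.succ_eq_add_one, Nat.sub_add_cancel hp,
        iterate_minimalPeriod]
    simp [List.getLast_eq_getElem, List.head_eq_getElem, hsrc, htgt, hlast]

theorem exists_isCycle_subset [Finite E] {S : Set E}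
    (hS : ∀ e ∈ S, ∃ e' ∈ S, G.src e' = G.tgt e) {e₀ : E} (he₀ : e₀ ∈ S) :
    ∃ l, G.IsCycle l ∧ ∀ e ∈ l, e ∈ S := by
  -- Iterate on nodes, not edges: a periodic orbit of nodes has pairwise distinct sources.
  let nxt : G.src '' S → E := fun a => a.2.choose
  have hnxt (a : G.src '' S) : nxt a ∈ S ∧ G.src (nxt a) = a := a.2.choose_spec
  let f : G.src '' S → G.src '' S := fun a =>
    ⟨G.tgt (nxt a), (hS _ (hnxt a).1).imp fun _ h => ⟨h.1, h.2⟩⟩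
  obtain ⟨m, hm⟩ := exists_iterate_mem_periodicPts f ⟨G.src e₀, Set.mem_image_of_mem _ he₀⟩
  refine ⟨_, isCycle_map_range_iterate Subtype.val_injective (fun a => (hnxt a).2)
    (fun _ => rfl) hm, ?_⟩
  simp only [List.mem_map]
  rintro _ ⟨k, -, rfl⟩
  exact (hnxt _).1

theorem exists_isChain_cons_of_reflTransGen {e : E} {b : V}
    (h : Relation.ReflTransGen (G.Rel Set.univ) (G.tgt e) b) :
    ∃ p : List E, (e :: p).IsChain (fun a b => G.tgt a = G.src b) ∧
      G.tgt ((e :: p).getLast (List.cons_ne_nil _ _)) = b := by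
  induction h with
  | refl => exact ⟨[], List.isChain_singleton e, rfl⟩
  | tail _ hstep ih =>
    obtain ⟨p, hchain, hlast⟩ := ih
    obtain ⟨f, -, hf, rfl⟩ := hstep
    refine ⟨p ++ [f], ?_, by simp⟩
    rw [← List.cons_append]
    refine hchain.append (List.isChain_singleton f) fun x hx y hy => ?_
    simp only [List.getLast?_eq_some_getLast (List.cons_ne_nil e p), Option.mem_def,
      Option.some.injEq, List.head?_cons] at hx hy
    rw [← hx, ← hy, hlast, hf]

theorem StronglyConnected.exists_isClosedWalk_mem (hG : G.StronglyConnected) (e : E) :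
    ∃ l, G.IsClosedWalk l ∧ e ∈ l := by
  obtain ⟨p, hchain, hlast⟩ := exists_isChain_cons_of_reflTransGen (hG (G.tgt e) (G.src e))
  exact ⟨e :: p, ⟨hchain, fun _ => hlast⟩, List.mem_cons_self⟩

variable [DecidableEq V]

theorem incidence_apply (v : V) (e : E) :
    G.incidence v e = (if G.tgt e = v then 1 else 0) - (if G.src e = v then 1 else 0) := by
  unfold incidence
  by_cases ht : G.tgt e = v <;> by_cases hs : G.src e = v <;> simp [ht, hs]

variable [Fintype E]

theorem incidence_mulVec_apply (w : E → ℝ) (v : V) :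
    (G.incidence *ᵥ w) v = ∑ e with G.tgt e = v, w e - ∑ e with G.src e = v, w e := by
  simp only [Matrix.mulVec, dotProduct, incidence_apply, sub_mul, ite_mul, one_mul, zero_mul,
    Finset.sum_sub_distrib, Finset.sum_filter]

theorem mem_ker_incidence_iff {w : E → ℝ} :
    w ∈ LinearMap.ker G.incidence.mulVecLin ↔
      ∀ v, ∑ e with G.tgt e = v, w e = ∑ e with G.src e = v, w e := by
  simp only [LinearMap.mem_ker, Matrix.mulVecLin_apply, funext_iff, incidence_mulVec_apply,
    Pi.zero_apply, sub_eq_zero]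

theorem exists_src_eq_tgt_pos {w : E → ℝ} (hw : w ∈ LinearMap.ker G.incidence.mulVecLin)
    (hw₀ : 0 ≤ w) {e : E} (he : 0 < w e) : ∃ e', G.src e' = G.tgt e ∧ 0 < w e' := by
  have hout : ∑ e' with G.src e' = G.tgt e, (0 : ℝ) < ∑ e' with G.src e' = G.tgt e, w e' := by
    rw [Finset.sum_const_zero, ← mem_ker_incidence_iff.mp hw]
    exact he.trans_le (Finset.single_le_sum (fun i _ => hw₀ i) (by simp))
  obtain ⟨e', he', hpos⟩ := Finset.exists_lt_of_sum_lt hout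
  exact ⟨e', (Finset.mem_filter.mp he').2, hpos⟩

theorem exists_isCycle_pos {w : E → ℝ} (hw : w ∈ LinearMap.ker G.incidence.mulVecLin)
    (hw₀ : 0 ≤ w) {e₀ : E} (he₀ : 0 < w e₀) : ∃ l, G.IsCycle l ∧ ∀ e ∈ l, 0 < w e :=
  exists_isCycle_subset (S := {e | 0 < w e})
    (fun _ he => (exists_src_eq_tgt_pos hw hw₀ he).imp fun _ h => ⟨h.2, h.1⟩) he₀

variable [DecidableEq E]

variable (G) in
def cycleVectors : Set (E → ℝ) :=
  {w | ∃ l : List E, G.IsCycle l ∧ w = fun e => if e ∈ l then 1 else 0}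

theorem IsClosedWalk.count_mem_ker {l : List E}
    (hl : G.IsClosedWalk l) :
    (fun e => (l.count e : ℝ)) ∈ LinearMap.ker G.incidence.mulVecLin := by
  refine mem_ker_incidence_iff.mpr fun v => ?_
  simp only [← Nat.cast_sum, Finset.sum_filter_count_eq_count_map, hl.map_tgt_perm.count_eq]

theorem IsCycle.indicator_mem_ker {l : List E} (hl : G.IsCycle l) :
    (fun e => if e ∈ l then (1 : ℝ) else 0) ∈ LinearMap.ker G.incidence.mulVecLin := by
  have hnodup : l.Nodup := hl.2.1.of_map _
  convert hl.isClosedWalk.count_mem_ker using 2 with e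
  split_ifs with he
  · simp [List.count_eq_one_of_mem hnodup he]
  · simp [List.count_eq_zero_of_not_mem he]

theorem StronglyConnected.exists_mem_ker_one_le (hG : G.StronglyConnected) :
    ∃ x ∈ LinearMap.ker G.incidence.mulVecLin, ∀ e, 1 ≤ x e := by
  choose L hL hmem using hG.exists_isClosedWalk_mem
  refine ⟨∑ e, fun f => ((L e).count f : ℝ), Submodule.sum_mem _ fun e _ => (hL e).count_mem_ker,
    fun f => ?_⟩
  rw [Finset.sum_apply]
  calc (1 : ℝ) ≤ (L f).count f := by exact_mod_cast List.count_pos_iff.mpr (hmem f)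
    _ ≤ ∑ e, ((L e).count f : ℝ) :=
      Finset.single_le_sum (f := fun e => ((L e).count f : ℝ)) (fun _ _ => Nat.cast_nonneg _)
        (Finset.mem_univ f)

theorem mem_span_cycleVectors_of_nonneg {w : E → ℝ}
    (hw : w ∈ LinearMap.ker G.incidence.mulVecLin) (hw₀ : 0 ≤ w) :
    w ∈ Submodule.span ℝ G.cycleVectors := by
  suffices ∀ s : Finset E, ∀ w ∈ LinearMap.ker G.incidence.mulVecLin, 0 ≤ w →
      (∀ e ∉ s, w e = 0) → w ∈ Submodule.span ℝ G.cycleVectors from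
    this Finset.univ w hw hw₀ (by simp)
  intro s
  induction s using Finset.strongInduction with
  | H s ih =>
  intro w hw hw₀ hs
  by_cases hzero : w = 0
  · exact hzero ▸ Submodule.zero_mem _
  obtain ⟨e₀, he₀⟩ := Function.ne_iff.mp hzero
  obtain ⟨l, hl, hpos⟩ := exists_isCycle_pos hw hw₀ ((hw₀ e₀).lt_of_ne' he₀)
  obtain ⟨m, hm, hmin⟩ := l.toFinset.exists_min_image w
    (List.toFinset_nonempty_iff _ |>.mpr hl.1)
  rw [List.mem_toFinset] at hm
  have hms : m ∈ s := by_contra fun h => (hpos m hm).ne' (hs m h)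
  set ν : E → ℝ := fun e => if e ∈ l then 1 else 0
  have hν : ν ∈ Submodule.span ℝ G.cycleVectors := Submodule.subset_span ⟨l, hl, rfl⟩
  set w' := w - w m • ν
  have hw' : w' ∈ LinearMap.ker G.incidence.mulVecLin :=
    sub_mem hw (Submodule.smul_mem _ _ hl.indicator_mem_ker)
  have hw'₀ : 0 ≤ w' := fun e => by
    by_cases he : e ∈ l
    · simpa [w', ν, he] using hmin e (List.mem_toFinset.mpr he)
    · simpa [w', ν, he] using hw₀ e
  have hw's : ∀ e ∉ s.erase m, w' e = 0 := fun e he => by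
    rcases eq_or_ne e m with rfl | hne
    · simp [w', ν, hm]
    · have hes : e ∉ s := fun h => he (Finset.mem_erase.mpr ⟨hne, h⟩)
      have hel : e ∉ l := fun h => (hpos e h).ne' (hs e hes)
      simp [w', ν, hel, hs e hes]
  have hsplit : w = w' + w m • ν := (sub_add_cancel w _).symm
  exact hsplit ▸ add_mem (ih _ (Finset.erase_ssubset hms) w' hw' hw'₀ hw's)
    (Submodule.smul_mem _ _ hν)

theorem StronglyConnected.ker_le_span_cycleVectors (hG : G.StronglyConnected) :
    LinearMap.ker G.incidence.mulVecLin ≤ Submodule.span ℝ G.cycleVectors := by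
  intro w hw
  obtain ⟨x, hx, hx₁⟩ := hG.exists_mem_ker_one_le
  have hx₀ : 0 ≤ x := fun e => zero_le_one.trans (hx₁ e)
  have hshift : 0 ≤ w + ‖w‖ • x := fun e => by
    have hwe : -‖w‖ ≤ w e := neg_le_of_abs_le (norm_le_pi_norm w e)
    have : ‖w‖ ≤ ‖w‖ * x e := le_mul_of_one_le_right (norm_nonneg w) (hx₁ e)
    simp only [Pi.add_apply, Pi.smul_apply, smul_eq_mul, Pi.zero_apply]
    linarith
  have hsum := mem_span_cycleVectors_of_nonneg (add_mem hw (Submodule.smul_mem _ ‖w‖ hx)) hshift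
  have hx' := Submodule.smul_mem _ ‖w‖ (mem_span_cycleVectors_of_nonneg hx hx₀)
  simpa using sub_mem hsum hx'

end Multidigraph

open scoped Classical

theorem stmt2_general {V E : Type} [Fintype E] [DecidableEq V]
    (G : Multidigraph V E) (hG : G.StronglyConnected) :
    Submodule.span ℝ
        {w : E → ℝ | ∃ l : List E, G.IsCycle l ∧ w = fun e => if e ∈ l then 1 else 0}
      = LinearMap.ker (Matrix.mulVecLin G.incidence) := by
  refine le_antisymm (Submodule.span_le.mpr ?_) hG.ker_le_span_cycleVectors
  rintro _ ⟨l, hl, rfl⟩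
  exact hl.indicator_mem_ker

/-- For a strongly connected multidigraph, the indicator vectors
`ν_σ` of the elementary cycles span the kernel of the incidence matrix. -/
theorem stmt2 {V E : Type} [Fintype V] [Fintype E] [DecidableEq V]
    (G : Multidigraph V E) (hG : G.StronglyConnected) :
    Submodule.span ℝ
        {w : E → ℝ | ∃ l : List E, G.IsCycle l ∧ w = fun e => if e ∈ l then 1 else 0}
      = LinearMap.ker (Matrix.mulVecLin G.incidence) :=
  stmt2_general G hG
end

section
/- (Factorization of tree sums over the cut node.) Under the hypotheses of the previous statement, for any node N ∈ H1 ∪ {*} and any set W of edges of G_{H1}: Σ_{τ ∈ Θ(N), W ⊆ τ} π(τ) = (Σ_{τ1 ∈ Θ_1(N), W ⊆ τ1} π(τ1)) · (Σ_{τ2 ∈ Θ_2(*)} π(τ2)), where Θ(N), Θ_1(N), Θ_2(*) denote the spanning trees of G, G_{H1}, G_{H2} rooted at N, N, * respectively. Consequently, with q(x) = 1/Σ_{τ∈Θ(*)} π(τ) and q_1(x) = 1/Σ_{τ1∈Θ_1(*)} π(τ1), one has q(x) Σ_{τ∈Θ(N), W⊆τ} π(τ) = q_1(x) Σ_{τ1∈Θ_1(N),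 W⊆τ1} π(τ1). -/
open scoped Classical

/-!
Let `N ∈ H1 ∪ {star}`. In a spanning tree of `G` rooted at `N`, the tree edge out of `star` (if
any) points into `H1`: otherwise `H2 ∪ {star}` would be closed under tree edges and could not reach
`N`. Hence `H1 ∪ {star}` is closed under tree edges, while a tree path starting in `H2` stays in
`H2` until it hits `star`. So splitting a tree by whether an edge leaves `H1 ∪ {star}` or `H2`
yields a spanning tree of `G_{H1}` rooted at `N` and one of `G_{H2}` rooted at `star`, and
conversely the union of two such trees is a spanning tree of `G` rooted at `N`. This bijection is
multiplicative for `π`, which gives the product formula; for `N = star`, `W = ∅` it factors the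
normalising sum as well, and the common factor over `Θ₂(star)` cancels.
-/

theorem Finset.sum_filter_prod_eq_mul_of_split {E F : Type*} [Fintype E] [DecidableEq E]
    [CommSemiring F] (p : E → Prop) [DecidablePred p] (P P₁ P₂ : Finset E → Prop)
    [DecidablePred P] [DecidablePred P₁] [DecidablePred P₂]
    (hP : ∀ τ, P τ ↔ P₁ (τ.filter p) ∧ P₂ (τ.filter (¬ p ·)))
    (hP₁ : ∀ σ, P₁ σ → ∀ e ∈ σ, p e) (hP₂ : ∀ σ, P₂ σ → ∀ e ∈ σ, ¬ p e) (w : E → F) :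
    ∑ τ ∈ univ.filter P, ∏ e ∈ τ, w e
      = (∑ σ ∈ univ.filter P₁, ∏ e ∈ σ, w e) * ∑ σ ∈ univ.filter P₂, ∏ e ∈ σ, w e := by
  have hsplit : ∀ σ₁ σ₂, P₁ σ₁ → P₂ σ₂ →
      (σ₁ ∪ σ₂).filter p = σ₁ ∧ (σ₁ ∪ σ₂).filter (¬ p ·) = σ₂ := fun σ₁ σ₂ h₁ h₂ => by
    simp only [filter_union, filter_true_of_mem (hP₁ σ₁ h₁), filter_false_of_mem (hP₂ σ₂ h₂),
      filter_false_of_mem fun e he => not_not.mpr (hP₁ σ₁ h₁ e he),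
      filter_true_of_mem (hP₂ σ₂ h₂), union_empty, empty_union, and_self]
  rw [sum_mul_sum, ← sum_product']
  refine sum_nbij' (fun τ => (τ.filter p, τ.filter (¬ p ·))) (fun σ => σ.1 ∪ σ.2) ?_ ?_ ?_ ?_ ?_
  · intro τ hτ
    simpa [mem_product] using (hP τ).mp (mem_filter.mp hτ).2
  · rintro ⟨σ₁, σ₂⟩ hσ
    simp only [mem_product, mem_filter, mem_univ, true_and] at hσ
    simpa [hP, hsplit σ₁ σ₂ hσ.1 hσ.2] using hσ
  · intro τ _
    exact filter_union_filter_not_eq p τ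
  · rintro ⟨σ₁, σ₂⟩ hσ
    simp only [mem_product, mem_filter, mem_univ, true_and] at hσ
    exact Prod.ext (hsplit σ₁ σ₂ hσ.1 hσ.2).1 (hsplit σ₁ σ₂ hσ.1 hσ.2).2
  · intro τ _
    exact (prod_filter_mul_prod_filter_not τ p w).symm

namespace Multidigraph

open Relation

variable {V E : Type*} (G : Multidigraph V E)

theorem rel_mono {σ τ : Set E} (h : σ ⊆ τ) {a b : V} (hab : G.Rel σ a b) : G.Rel τ a b :=
  let ⟨e, he, hab⟩ := hab; ⟨e, h he, hab⟩

theorem reflTransGen_rel_mono {σ τ : Set E} (h : σ ⊆ τ) {a b : V}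
    (hab : ReflTransGen (G.Rel σ) a b) : ReflTransGen (G.Rel τ) a b :=
  ReflTransGen.mono (fun _ _ => G.rel_mono h) a b hab

variable {G} {τ : Finset E} {S : Set V} {r v w : V}

theorem mem_of_reflTransGen_of_closed (hS : ∀ e ∈ τ, G.src e ∈ S → G.tgt e ∈ S)
    (hvw : ReflTransGen (G.Rel τ) v w) (hv : v ∈ S) : w ∈ S := by
  induction hvw with
  | refl => exact hv
  | tail _ hstep ih =>
    obtain ⟨e, he, rfl, rfl⟩ := hstep
    exact hS e he ih

theorem reflTransGen_of_closed {σ : Finset E} (hS : ∀ e ∈ τ, G.src e ∈ S → G.tgt e ∈ S)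
    (hσ : ∀ e ∈ τ, G.src e ∈ S → e ∈ σ) (hvw : ReflTransGen (G.Rel τ) v w) (hv : v ∈ S) :
    ReflTransGen (G.Rel σ) v w := by
  induction hvw using ReflTransGen.head_induction_on with
  | refl => exact .refl
  | head hstep _ ih =>
    obtain ⟨e, he, rfl, rfl⟩ := hstep
    exact .head ⟨e, hσ e he hv, rfl, rfl⟩ (ih (hS e he hv))

theorem reflTransGen_of_exit {σ : Finset E} (hS : ∀ e ∈ τ, G.src e ∈ S → G.tgt e ∈ S ∪ {r})
    (hσ : ∀ e ∈ τ, G.src e ∈ S → e ∈ σ) (hvw : ReflTransGen (G.Rel τ) v w) (hv : v ∈ S ∪ {r})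
    (hw : w ∉ S) : ReflTransGen (G.Rel σ) v r := by
  induction hvw using ReflTransGen.head_induction_on with
  | refl => exact hv.resolve_left hw ▸ .refl
  | head hstep _ ih =>
    obtain ⟨e, he, rfl, rfl⟩ := hstep
    rcases hv with hv | rfl
    · exact .head ⟨e, hσ e he hv, rfl, rfl⟩ (ih (hS e he hv))
    · exact .refl

theorem existsUnique_src_eq_iff_of_subset {σ : Finset E} (hστ : σ ⊆ τ)
    (hσ : ∀ e ∈ τ, G.src e = v → e ∈ σ) :
    (∃! e, e ∈ σ ∧ G.src e = v) ↔ ∃! e, e ∈ τ ∧ G.src e = v :=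
  existsUnique_congr fun e => ⟨fun h => ⟨hστ h.1, h.2⟩, fun h => ⟨hσ e h.1 h.2, h.2⟩⟩

namespace IsSpanningTreeOn

theorem src_mem (h : G.IsSpanningTreeOn S τ r) {e : E} (he : e ∈ τ) : G.src e ∈ S :=
  (h.1 e he).1

theorem src_ne (h : G.IsSpanningTreeOn S τ r) {e : E} (he : e ∈ τ) : G.src e ≠ r :=
  h.2.2.1 e he

theorem src_mem_of_union_singleton (h : G.IsSpanningTreeOn (S ∪ {r}) τ r) {e : E} (he : e ∈ τ) :
    G.src e ∈ S :=
  (h.src_mem he).resolve_right (h.src_ne he)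

theorem existsUnique_src_eq (h : G.IsSpanningTreeOn S τ r) (hv : v ∈ S) (hvr : v ≠ r) :
    ∃! e, e ∈ τ ∧ G.src e = v :=
  h.2.1 v hv hvr

theorem reflTransGen (h : G.IsSpanningTreeOn S τ r) (hv : v ∈ S) :
    ReflTransGen (G.Rel τ) v r :=
  h.2.2.2 v hv

end IsSpanningTreeOn

structure IsCutNode (G : Multidigraph V E) (star : V) (H1 H2 : Set V) : Prop where
  disjoint : Disjoint H1 H2
  notMem_left : star ∉ H1
  notMem_right : star ∉ H2
  union_eq_univ : H1 ∪ H2 ∪ {star} = Set.univ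
  separates : ∀ e : E, ¬ (G.src e ∈ H1 ∧ G.tgt e ∈ H2) ∧ ¬ (G.src e ∈ H2 ∧ G.tgt e ∈ H1)

namespace IsCutNode

variable {star N : V} {H1 H2 : Set V}

theorem symm (hc : G.IsCutNode star H1 H2) : G.IsCutNode star H2 H1 where
  disjoint := hc.disjoint.symm
  notMem_left := hc.notMem_right
  notMem_right := hc.notMem_left
  union_eq_univ := by rw [Set.union_comm H2, hc.union_eq_univ]
  separates e := (hc.separates e).symm

theorem mem_or (hc : G.IsCutNode star H1 H2) (v : V) : v ∈ H1 ∨ v ∈ H2 ∨ v = star := by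
  have hv : v ∈ H1 ∪ H2 ∪ {star} := hc.union_eq_univ ▸ Set.mem_univ v
  rcases hv with (hv | hv) | hv
  exacts [.inl hv, .inr (.inl hv), .inr (.inr hv)]

theorem notMem_right_of_mem (hc : G.IsCutNode star H1 H2) (hv : v ∈ H1 ∪ {star}) : v ∉ H2 := by
  rintro hv₂
  rcases hv with hv₁ | rfl
  exacts [hc.disjoint.notMem_of_mem_left hv₁ hv₂, hc.notMem_right hv₂]

theorem notMem_iff (hc : G.IsCutNode star H1 H2) : v ∉ H1 ∪ {star} ↔ v ∈ H2 := by
  refine ⟨fun hv => ?_, fun hv₂ hv => hc.notMem_right_of_mem hv hv₂⟩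
  rcases hc.mem_or v with hv₁ | hv₂ | rfl
  exacts [absurd (.inl hv₁) hv, hv₂, absurd (.inr rfl) hv]

theorem tgt_mem_of_src_mem (hc : G.IsCutNode star H1 H2) {e : E} (he : G.src e ∈ H1) :
    G.tgt e ∈ H1 ∪ {star} := by
  rcases hc.mem_or (G.tgt e) with h | h | h
  exacts [.inl h, absurd ⟨he, h⟩ (hc.separates e).1, .inr h]

theorem tgt_mem_of_isSpanningTree (hc : G.IsCutNode star H1 H2) (hN : N ∈ H1 ∪ {star})
    (hτ : G.IsSpanningTree τ N) {e : E} (he : e ∈ τ) (hsrc : G.src e ∈ H1 ∪ {star}) :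
    G.tgt e ∈ H1 ∪ {star} := by
  obtain ⟨-, huniq, hroot, hreach⟩ := hτ
  rcases hsrc with hsrc | hsrc
  · exact hc.tgt_mem_of_src_mem hsrc
  have hNstar : N ≠ star := fun h => hroot e he (hsrc.trans h.symm)
  by_contra htgt
  have hclosed : ∀ e' ∈ τ, G.src e' ∈ H2 ∪ {star} → G.tgt e' ∈ H2 ∪ {star} := by
    rintro e' he' (hsrc' | hsrc')
    · exact hc.symm.tgt_mem_of_src_mem hsrc'
    · obtain rfl := (huniq star trivial hNstar.symm).unique ⟨he', hsrc'⟩ ⟨he, hsrc⟩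
      exact .inl (hc.notMem_iff.mp htgt)
  exact hc.notMem_right_of_mem hN <|
    (mem_of_reflTransGen_of_closed hclosed (hreach star trivial) (.inr rfl)).resolve_right hNstar

theorem isSpanningTreeOn_filter_left (hc : G.IsCutNode star H1 H2) (hN : N ∈ H1 ∪ {star})
    (hτ : G.IsSpanningTree τ N) :
    G.IsSpanningTreeOn (H1 ∪ {star}) (τ.filter (G.src · ∈ H1 ∪ {star})) N := by
  have hclosed := fun e he => hc.tgt_mem_of_isSpanningTree hN hτ (e := e) he
  obtain ⟨-, huniq, hroot, hreach⟩ := hτ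
  refine ⟨fun e he => ?_, fun v hv hvN => ?_, fun e he => ?_, fun v hv => ?_⟩
  · obtain ⟨he, hsrc⟩ := Finset.mem_filter.mp he
    exact ⟨hsrc, hclosed e he hsrc⟩
  · exact (existsUnique_src_eq_iff_of_subset (Finset.filter_subset _ _)
      fun e he hsrc => Finset.mem_filter.mpr ⟨he, hsrc ▸ hv⟩).mpr (huniq v trivial hvN)
  · exact hroot e (Finset.mem_filter.mp he).1
  · exact reflTransGen_of_closed hclosed (fun e he hsrc => Finset.mem_filter.mpr ⟨he, hsrc⟩)
      (hreach v trivial) hv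

theorem isSpanningTreeOn_filter_right (hc : G.IsCutNode star H1 H2) (hN : N ∈ H1 ∪ {star})
    (hτ : G.IsSpanningTree τ N) :
    G.IsSpanningTreeOn (H2 ∪ {star}) (τ.filter (G.src · ∈ H2)) star := by
  have hclosed : ∀ e ∈ τ, G.src e ∈ H2 → G.tgt e ∈ H2 ∪ {star} :=
    fun e _ => hc.symm.tgt_mem_of_src_mem
  obtain ⟨-, huniq, -, hreach⟩ := hτ
  refine ⟨fun e he => ?_, fun v hv hvstar => ?_, fun e he => ?_, fun v hv => ?_⟩
  · have hsrc := (Finset.mem_filter.mp he).2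
    exact ⟨.inl hsrc, hc.symm.tgt_mem_of_src_mem hsrc⟩
  · have hv₂ : v ∈ H2 := hv.resolve_right hvstar
    have hvN : v ≠ N := fun h => hc.notMem_right_of_mem hN (h ▸ hv₂)
    exact (existsUnique_src_eq_iff_of_subset (Finset.filter_subset _ _)
      fun e he hsrc => Finset.mem_filter.mpr ⟨he, hsrc ▸ hv₂⟩).mpr (huniq v trivial hvN)
  · exact fun h => hc.notMem_right (h ▸ (Finset.mem_filter.mp he).2)
  · exact reflTransGen_of_exit hclosed (fun e he hsrc => Finset.mem_filter.mpr ⟨he, hsrc⟩)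
      (hreach v trivial) hv (hc.notMem_right_of_mem hN)

theorem isSpanningTree_union (hc : G.IsCutNode star H1 H2) (hN : N ∈ H1 ∪ {star})
    {τ₁ τ₂ : Finset E} (h₁ : G.IsSpanningTreeOn (H1 ∪ {star}) τ₁ N)
    (h₂ : G.IsSpanningTreeOn (H2 ∪ {star}) τ₂ star) :
    G.IsSpanningTree (τ₁ ∪ τ₂) N := by
  have hsrc₁ : ∀ e ∈ τ₁, G.src e ∉ H2 := fun e he => hc.notMem_right_of_mem (h₁.src_mem he)
  have hsrc₂ : ∀ e ∈ τ₂, G.src e ∈ H2 := fun _ => h₂.src_mem_of_union_singleton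
  refine ⟨fun _ _ => ⟨trivial, trivial⟩, fun v _ hvN => ?_, fun e he => ?_, fun v _ => ?_⟩
  · by_cases hv₂ : v ∈ H2
    · have hvstar : v ≠ star := fun h => hc.notMem_right (h ▸ hv₂)
      refine (existsUnique_src_eq_iff_of_subset Finset.subset_union_right fun e he hsrc => ?_).mp
        (h₂.existsUnique_src_eq (.inl hv₂) hvstar)
      exact (Finset.mem_union.mp he).resolve_left fun he₁ => hsrc₁ e he₁ (hsrc ▸ hv₂)
    · have hv : v ∈ H1 ∪ {star} := by
        rcases hc.mem_or v with h | h | h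
        exacts [.inl h, absurd h hv₂, .inr h]
      refine (existsUnique_src_eq_iff_of_subset Finset.subset_union_left fun e he hsrc => ?_).mp
        (h₁.existsUnique_src_eq hv hvN)
      exact (Finset.mem_union.mp he).resolve_right fun he₂ => hv₂ (hsrc ▸ hsrc₂ e he₂)
  · rcases Finset.mem_union.mp he with he | he
    · exact h₁.src_ne he
    · exact fun h => hc.notMem_right_of_mem hN (h ▸ hsrc₂ e he)
  · have hstar : ReflTransGen (G.Rel ↑(τ₁ ∪ τ₂)) star N :=
      reflTransGen_rel_mono G Finset.subset_union_left (h₁.reflTransGen (.inr rfl))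
    rcases hc.mem_or v with hv | hv | rfl
    · exact reflTransGen_rel_mono G Finset.subset_union_left (h₁.reflTransGen (.inl hv))
    · exact (reflTransGen_rel_mono G Finset.subset_union_right (h₂.reflTransGen (.inl hv))).trans
        hstar
    · exact hstar

theorem isSpanningTree_iff (hc : G.IsCutNode star H1 H2) (hN : N ∈ H1 ∪ {star}) :
    G.IsSpanningTree τ N ↔
      G.IsSpanningTreeOn (H1 ∪ {star}) (τ.filter (G.src · ∈ H1 ∪ {star})) N ∧
        G.IsSpanningTreeOn (H2 ∪ {star}) (τ.filter (¬ G.src · ∈ H1 ∪ {star})) star := by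
  have hright : τ.filter (¬ G.src · ∈ H1 ∪ {star}) = τ.filter (G.src · ∈ H2) :=
    Finset.filter_congr fun e _ => hc.notMem_iff
  rw [hright]
  refine ⟨fun hτ => ⟨hc.isSpanningTreeOn_filter_left hN hτ,
    hc.isSpanningTreeOn_filter_right hN hτ⟩, fun ⟨h₁, h₂⟩ => ?_⟩
  simpa only [← hright, Finset.filter_union_filter_not_eq] using hc.isSpanningTree_union hN h₁ h₂

theorem sum_spanningTrees_eq_mul {F : Type*} [CommSemiring F] [Fintype E]
    (hc : G.IsCutNode star H1 H2) (hN : N ∈ H1 ∪ {star}) (π : E → F) (W : Finset E)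
    (hW : ∀ e ∈ W, G.src e ∈ H1 ∪ {star}) :
    ∑ τ ∈ Finset.univ.filter (fun τ : Finset E => G.IsSpanningTree τ N ∧ W ⊆ τ), ∏ e ∈ τ, π e
      = (∑ τ ∈ Finset.univ.filter
            (fun τ : Finset E => G.IsSpanningTreeOn (H1 ∪ {star}) τ N ∧ W ⊆ τ), ∏ e ∈ τ, π e)
        * ∑ τ ∈ Finset.univ.filter
            (fun τ : Finset E => G.IsSpanningTreeOn (H2 ∪ {star}) τ star), ∏ e ∈ τ, π e := by
  refine Finset.sum_filter_prod_eq_mul_of_split (G.src · ∈ H1 ∪ {star}) _ _ _ (fun τ => ?_)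
    (fun _ h _ => h.1.src_mem) (fun _ h _ he => hc.notMem_iff.mpr (h.src_mem_of_union_singleton he))
    π
  have hWτ : W ⊆ τ ↔ W ⊆ τ.filter (G.src · ∈ H1 ∪ {star}) :=
    ⟨fun h e he => Finset.mem_filter.mpr ⟨h he, hW e he⟩,
      fun h => h.trans (Finset.filter_subset _ _)⟩
  rw [hc.isSpanningTree_iff hN, hWτ]
  tauto

end IsCutNode

end Multidigraph

theorem stmt14_general {V E : Type} [Fintype E] {F : Type} [Field F]
    (G : Multidigraph V E)
    (star : V) (H1 H2 : Set V)
    (hdisj : Disjoint H1 H2) (hstar1 : star ∉ H1) (hstar2 : star ∉ H2)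
    (hcover : H1 ∪ H2 ∪ {star} = Set.univ)
    (hsep : ∀ e : E, ¬ (G.src e ∈ H1 ∧ G.tgt e ∈ H2) ∧ ¬ (G.src e ∈ H2 ∧ G.tgt e ∈ H1))
    (N : V) (hN : N ∈ H1 ∪ {star})
    (π : E → F) (W : Finset E)
    (hW : ∀ e ∈ W, G.src e ∈ H1 ∪ {star} ∧ G.tgt e ∈ H1 ∪ {star}) :
    (∑ τ ∈ Finset.univ.filter (fun τ : Finset E => G.IsSpanningTree τ N ∧ W ⊆ τ),
        ∏ e ∈ τ, π e)
      = (∑ τ ∈ Finset.univ.filter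
            (fun τ : Finset E => G.IsSpanningTreeOn (H1 ∪ {star}) τ N ∧ W ⊆ τ),
          ∏ e ∈ τ, π e)
        * (∑ τ ∈ Finset.univ.filter
            (fun τ : Finset E => G.IsSpanningTreeOn (H2 ∪ {star}) τ star),
          ∏ e ∈ τ, π e) ∧
    ((∑ τ ∈ Finset.univ.filter (fun τ : Finset E => G.IsSpanningTree τ star),
        ∏ e ∈ τ, π e) ≠ 0 →
     (∑ τ ∈ Finset.univ.filter
          (fun τ : Finset E => G.IsSpanningTreeOn (H1 ∪ {star}) τ star),
        ∏ e ∈ τ, π e) ≠ 0 →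
      (∑ τ ∈ Finset.univ.filter (fun τ : Finset E => G.IsSpanningTree τ star),
          ∏ e ∈ τ, π e)⁻¹
        * (∑ τ ∈ Finset.univ.filter (fun τ : Finset E => G.IsSpanningTree τ N ∧ W ⊆ τ),
            ∏ e ∈ τ, π e)
      = (∑ τ ∈ Finset.univ.filter
            (fun τ : Finset E => G.IsSpanningTreeOn (H1 ∪ {star}) τ star),
            ∏ e ∈ τ, π e)⁻¹
        * (∑ τ ∈ Finset.univ.filter
            (fun τ : Finset E => G.IsSpanningTreeOn (H1 ∪ {star}) τ N ∧ W ⊆ τ),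
            ∏ e ∈ τ, π e)) := by
  have hc : G.IsCutNode star H1 H2 := ⟨hdisj, hstar1, hstar2, hcover, hsep⟩
  have hfac := hc.sum_spanningTrees_eq_mul hN π W fun e he => (hW e he).1
  have hfac_star := hc.sum_spanningTrees_eq_mul (.inr rfl) π ∅ (by simp)
  simp only [Finset.empty_subset, and_true] at hfac_star
  refine ⟨hfac, fun hS _ => ?_⟩
  rw [hfac_star] at hS ⊢
  rw [hfac, inv_mul_eq_div, inv_mul_eq_div, mul_div_mul_right _ _ (right_ne_zero_of_mul hS)]

/-- Factorization of tree sums over the cut node. -/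
theorem stmt14 {V E : Type} [Fintype V] [Fintype E] {F : Type} [Field F]
    (G : Multidigraph V E) (hconn : G.Connected)
    (star : V) (H1 H2 : Set V)
    (hdisj : Disjoint H1 H2) (hstar1 : star ∉ H1) (hstar2 : star ∉ H2)
    (hcover : H1 ∪ H2 ∪ {star} = Set.univ)
    (hsep : ∀ e : E, ¬ (G.src e ∈ H1 ∧ G.tgt e ∈ H2) ∧ ¬ (G.src e ∈ H2 ∧ G.tgt e ∈ H1))
    (N : V) (hN : N ∈ H1 ∪ {star})
    (π : E → F) (W : Finset E)
    (hW : ∀ e ∈ W, G.src e ∈ H1 ∪ {star} ∧ G.tgt e ∈ H1 ∪ {star}) :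
    (∑ τ ∈ Finset.univ.filter (fun τ : Finset E => G.IsSpanningTree τ N ∧ W ⊆ τ),
        ∏ e ∈ τ, π e)
      = (∑ τ ∈ Finset.univ.filter
            (fun τ : Finset E => G.IsSpanningTreeOn (H1 ∪ {star}) τ N ∧ W ⊆ τ),
          ∏ e ∈ τ, π e)
        * (∑ τ ∈ Finset.univ.filter
            (fun τ : Finset E => G.IsSpanningTreeOn (H2 ∪ {star}) τ star),
          ∏ e ∈ τ, π e) ∧
    ((∑ τ ∈ Finset.univ.filter (fun τ : Finset E => G.IsSpanningTree τ star),
        ∏ e ∈ τ, π e) ≠ 0 →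
     (∑ τ ∈ Finset.univ.filter
          (fun τ : Finset E => G.IsSpanningTreeOn (H1 ∪ {star}) τ star),
        ∏ e ∈ τ, π e) ≠ 0 →
      (∑ τ ∈ Finset.univ.filter (fun τ : Finset E => G.IsSpanningTree τ star),
          ∏ e ∈ τ, π e)⁻¹
        * (∑ τ ∈ Finset.univ.filter (fun τ : Finset E => G.IsSpanningTree τ N ∧ W ⊆ τ),
            ∏ e ∈ τ, π e)
      = (∑ τ ∈ Finset.univ.filter
            (fun τ : Finset E => G.IsSpanningTreeOn (H1 ∪ {star}) τ star),
            ∏ e ∈ τ, π e)⁻¹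
        * (∑ τ ∈ Finset.univ.filter
            (fun τ : Finset E => G.IsSpanningTreeOn (H1 ∪ {star}) τ N ∧ W ⊆ τ),
            ∏ e ∈ τ, π e)) :=
  stmt14_general G star H1 H2 hdisj hstar1 hstar2 hcover hsep N hN π W hW
end
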